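/- arXiv:1207.2523 — 5 statements merged into one kernel-verified Lean document; each statement's English description precedes it below -/
import Mathlib

section
/- Let E be a Hausdorff topological space equipped with its Borel σ-algebra, and let (p_t)_{t>0} be a Markov semigroup of probability transition kernels on E (i.e. each p_t(x,·) is a probability measure, x ↦ p_t(x,A) is measurable for every Borel set A, and the Chapman–Kolmogorov identity p_{t+s}(x,A) = ∫_E p_s(y,A) p_t(x,dy) holds for all s,t > 0). If (p_t) is irreducible and strong Feller, then there exists at most one invariant probability measure for (p_t). -/
open MeasureTheory ProbabilityTheory Set

/-! If `μ ≠ ν` are invariant for `κ = p 1`, a Hahn set `s` splits `ν - μ` into two nonzero,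
mutually singular measures `ν|s - μ|s` and `μ|sᶜ - ν|sᶜ`; since `κ` conserves mass, each part is
again invariant. The strong Feller function `x ↦ κ x s` is continuous, vanishes almost everywhere
for the part carried by `sᶜ`, and is not identically zero because of the part carried by `s`. Its
support is therefore a nonempty open set that the part carried by `sᶜ` does not charge, whereas
irreducibility makes every nonzero invariant measure charge every nonempty open set. -/

namespace MeasureTheory

lemma IsHahnDecomposition.eq_of_restrict_sub_restrict_eq_zero
    {α : Type*} [MeasurableSpace α] {μ ν : Measure α} [IsFiniteMeasure μ] [IsFiniteMeasure ν]
    {s : Set α} (h : IsHahnDecomposition μ ν s)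
    (huniv : μ univ = ν univ) (h0 : ν.restrict s - μ.restrict s = 0) : ν = μ := by
  have hs : ν.restrict s = μ.restrict s := by
    rw [← Measure.sub_add_cancel_of_le h.le_on, h0, zero_add]
  refine Measure.eq_of_le_of_measure_univ_eq ?_ huniv.symm
  rw [← ν.restrict_add_restrict_compl h.measurableSet,
    ← μ.restrict_add_restrict_compl h.measurableSet, hs]
  exact add_le_add le_rfl h.ge_on_compl

end MeasureTheory

namespace ProbabilityTheory.Kernel

variable {α : Type*} [MeasurableSpace α] {κ : Kernel α α} {μ ν : Measure α}

lemma Invariant.restrict_sub_restrict [IsMarkovKernel κ] [IsFiniteMeasure μ] [IsFiniteMeasure ν]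
    (hμ : κ.Invariant μ) (hν : κ.Invariant ν) {s : Set α} (h : IsHahnDecomposition μ ν s) :
    κ.Invariant (ν.restrict s - μ.restrict s) := by
  set η₁ := ν.restrict s - μ.restrict s
  set η₂ := μ.restrict sᶜ - ν.restrict sᶜ
  have hs := h.measurableSet
  have hη₁ : η₁ + μ.restrict s = ν.restrict s := Measure.sub_add_cancel_of_le h.le_on
  have hη₂ : η₂ + ν.restrict sᶜ = μ.restrict sᶜ := Measure.sub_add_cancel_of_le h.ge_on_compl
  have hsum : μ + η₁ = ν + η₂ := by
    rw [← μ.restrict_add_restrict_compl hs, ← ν.restrict_add_restrict_compl hs, ← hη₁, ← hη₂]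
    abel
  have hcomp : μ + κ ∘ₘ η₁ = ν + κ ∘ₘ η₂ := by
    simpa only [Measure.comp_add, hμ.def, hν.def] using congrArg (κ ∘ₘ ·) hsum
  have hη₁_univ : η₁ univ = η₁ s := by
    have hη₁_compl : η₁ sᶜ = 0 :=
      nonpos_iff_eq_zero.1 ((Measure.le_iff'.1 Measure.sub_le sᶜ).trans_eq (by simp [hs]))
    rw [← measure_add_measure_compl hs, hη₁_compl, add_zero]
  have hcomp_s : (κ ∘ₘ η₁) s = η₁ s + (κ ∘ₘ η₂) s := by
    have hν_s : ν s = μ s + η₁ s := by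
      rw [← ν.restrict_apply_self s, ← hη₁, Measure.add_apply, μ.restrict_apply_self, add_comm]
    have hcomp_at_s := congrArg (· s) hcomp
    rw [Measure.add_apply, Measure.add_apply, hν_s, add_assoc] at hcomp_at_s
    exact (ENNReal.add_right_inj (measure_ne_top μ s)).1 hcomp_at_s
  have hcomp_le : (κ ∘ₘ η₁) s ≤ η₁ s := by
    rw [← hη₁_univ, ← Measure.comp_apply_univ (κ := κ)]
    exact measure_mono (subset_univ s)
  have hcomp₂_s : (κ ∘ₘ η₂) s = 0 := by
    refine nonpos_iff_eq_zero.1 (ENNReal.le_of_add_le_add_left (measure_ne_top η₁ s) ?_)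
    rwa [add_zero, ← hcomp_s]
  have hcomp₁_compl : (κ ∘ₘ η₁) sᶜ = 0 := by
    rw [measure_compl hs (measure_ne_top _ _), Measure.comp_apply_univ (κ := κ), hcomp_s, hcomp₂_s,
      add_zero, hη₁_univ, tsub_self]
  have hrestrict : μ.restrict s + κ ∘ₘ η₁ = μ.restrict s + η₁ := by
    have hcomp_on_s := congrArg (Measure.restrict · s) hcomp
    simp only [Measure.restrict_add, Measure.restrict_eq_zero.2 hcomp₂_s,
      Measure.restrict_eq_self_of_ae_mem (ae_iff.2 hcomp₁_compl)] at hcomp_on_s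
    rw [hcomp_on_s, ← hη₁, add_zero, add_comm]
  exact le_antisymm (Measure.le_of_add_le_add_left hrestrict.le)
    (Measure.le_of_add_le_add_left hrestrict.ge)

lemma Invariant.measure_pos_of_isOpen [TopologicalSpace α] [OpensMeasurableSpace α]
    (hirr : ∀ x U, IsOpen U → U.Nonempty → 0 < κ x U) (hμ : κ.Invariant μ) (hμ0 : μ ≠ 0)
    {U : Set α} (hU : IsOpen U) (hne : U.Nonempty) : 0 < μ U := by
  have hsupp : Function.support (fun x => κ x U) = univ :=
    eq_univ_of_forall fun x => (hirr x U hU hne).ne'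
  rw [← hμ.def, Measure.bind_apply hU.measurableSet κ.aemeasurable,
    lintegral_pos_iff_support (κ.measurable_coe hU.measurableSet), hsupp]
  exact Measure.measure_univ_pos.2 hμ0

lemma not_mutuallySingular_of_invariant [TopologicalSpace α] [OpensMeasurableSpace α]
    (hSF : ∀ A, MeasurableSet A → Continuous fun x => κ x A)
    (hirr : ∀ x U, IsOpen U → U.Nonempty → 0 < κ x U)
    (hμ : κ.Invariant μ) (hν : κ.Invariant ν) (hμ0 : μ ≠ 0) (hν0 : ν ≠ 0) : ¬ μ ⟂ₘ ν := by
  rintro ⟨s, hs, hμs, hνsc⟩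
  have hlintegral : ∀ ρ : Measure α, κ.Invariant ρ → ∫⁻ x, κ x s ∂ρ = ρ s := fun ρ hρ => by
    rw [← Measure.bind_apply hs κ.aemeasurable, hρ.def]
  set U := Function.support fun x => κ x s
  have hU : IsOpen U := isOpen_compl_singleton.preimage (hSF s hs)
  have hμU : μ U = 0 :=
    (lintegral_eq_zero_iff (κ.measurable_coe hs)).1 ((hlintegral μ hμ).trans hμs)
  have hνs : ν s ≠ 0 := fun h => hν0 <| Measure.measure_univ_eq_zero.1 <| by
    rw [← measure_add_measure_compl hs, h, hνsc, add_zero]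
  have hUne : U.Nonempty := Function.support_nonempty_iff.2 fun h => hνs <| by
    rw [← hlintegral ν hν, h, Pi.zero_def, lintegral_zero]
  exact (hμ.measure_pos_of_isOpen hirr hμ0 hU hUne).ne' hμU

end ProbabilityTheory.Kernel

theorem uniqueness_of_invariant_measure_general
    {E : Type*} [TopologicalSpace E] [MeasurableSpace E] [BorelSpace E]
    (p : ℝ → E → Measure E)
    -- each `p t x` is a probability measure
    (hprob : ∀ t > (0 : ℝ), ∀ x : E, IsProbabilityMeasure (p t x))
    -- measurability in the space variable
    (hmeas : ∀ t > (0 : ℝ), ∀ A : Set E, MeasurableSet A →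
      Measurable (fun x => p t x A))
    -- irreducibility
    (hirr : ∀ t > (0 : ℝ), ∀ x : E, ∀ U : Set E, IsOpen U → U.Nonempty →
      0 < p t x U)
    -- strong Feller property
    (hSF : ∀ t > (0 : ℝ), ∀ A : Set E, MeasurableSet A →
      Continuous (fun x => p t x A)) :
    ∀ μ ν : Measure E,
      (IsProbabilityMeasure μ ∧
        ∀ t > (0 : ℝ), ∀ A : Set E, MeasurableSet A → ∫⁻ x, p t x A ∂μ = μ A) →
      (IsProbabilityMeasure ν ∧
        ∀ t > (0 : ℝ), ∀ A : Set E, MeasurableSet A → ∫⁻ x, p t x A ∂ν = ν A) →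
      μ = ν := by
  rintro μ ν ⟨hμ, hμinv⟩ ⟨hν, hνinv⟩
  let κ : Kernel E E :=
    { toFun := p 1, measurable' := Measure.measurable_of_measurable_coe _ (hmeas 1 one_pos) }
  have : IsMarkovKernel κ := ⟨hprob 1 one_pos⟩
  have invariant : ∀ ρ : Measure E,
      (∀ t > (0 : ℝ), ∀ A : Set E, MeasurableSet A → ∫⁻ x, p t x A ∂ρ = ρ A) → κ.Invariant ρ :=
    fun ρ hρ => Measure.ext fun A hA =>
      (Measure.bind_apply hA κ.aemeasurable).trans (hρ 1 one_pos A hA)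
  obtain ⟨s, h⟩ := exists_isHahnDecomposition μ ν
  have huniv : μ univ = ν univ := by simp
  have hsing : ν.restrict s ⟂ₘ μ.restrict sᶜ :=
    ⟨sᶜ, h.measurableSet.compl, by simp [h.measurableSet], by simp [h.measurableSet]⟩
  by_contra hne
  exact κ.not_mutuallySingular_of_invariant (hSF 1 one_pos) (hirr 1 one_pos)
    ((invariant μ hμinv).restrict_sub_restrict (invariant ν hνinv) h)
    ((invariant ν hνinv).restrict_sub_restrict (invariant μ hμinv) h.compl)
    (fun h0 => hne (h.eq_of_restrict_sub_restrict_eq_zero huniv h0).symm)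
    (fun h0 => hne (h.compl.eq_of_restrict_sub_restrict_eq_zero huniv.symm h0))
    (hsing.mono Measure.sub_le Measure.sub_le)

/-- If a Markov semigroup of probability transition kernels on a Hausdorff space
(with its Borel σ-algebra) is irreducible and strong Feller, then it has at most
one invariant probability measure. -/
theorem uniqueness_of_invariant_measure
    {E : Type*} [TopologicalSpace E] [T2Space E] [MeasurableSpace E] [BorelSpace E]
    (p : ℝ → E → Measure E)
    -- each `p t x` is a probability measure
    (hprob : ∀ t > (0 : ℝ), ∀ x : E, IsProbabilityMeasure (p t x))
    -- measurability in the space variable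
    (hmeas : ∀ t > (0 : ℝ), ∀ A : Set E, MeasurableSet A →
      Measurable (fun x => p t x A))
    -- Chapman–Kolmogorov identity
    (hCK : ∀ s > (0 : ℝ), ∀ t > (0 : ℝ), ∀ (x : E) (A : Set E), MeasurableSet A →
      p (t + s) x A = ∫⁻ y, p s y A ∂(p t x))
    -- irreducibility
    (hirr : ∀ t > (0 : ℝ), ∀ x : E, ∀ U : Set E, IsOpen U → U.Nonempty →
      0 < p t x U)
    -- strong Feller property
    (hSF : ∀ t > (0 : ℝ), ∀ A : Set E, MeasurableSet A →
      Continuous (fun x => p t x A)) :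
    ∀ μ ν : Measure E,
      (IsProbabilityMeasure μ ∧
        ∀ t > (0 : ℝ), ∀ A : Set E, MeasurableSet A → ∫⁻ x, p t x A ∂μ = μ A) →
      (IsProbabilityMeasure ν ∧
        ∀ t > (0 : ℝ), ∀ A : Set E, MeasurableSet A → ∫⁻ x, p t x A ∂ν = ν A) →
      μ = ν :=
  uniqueness_of_invariant_measure_general p hprob hmeas hirr hSF
end

section
/- Let E be a Hausdorff topological space equipped with its Borel σ-algebra, and let (p_t)_{t>0} be a Markov semigroup of probability transition kernels on E that is irreducible and strong Feller. If μ is an invariant probability measure for (p_t), then μ is equivalent (mutually absolutely continuous) to the measure p_t(x,·) for every t>0 and every x∈E, and moreover for every x∈E and every Borel set A, p_t(x,A) → μ(A) as t → ∞. -/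
/-!
Irreducibility and invariance make every nonempty open set `μ`-positive. Since
`y ↦ p (t/2) y A` is continuous (strong Feller), it vanishes identically as soon as it vanishes
`μ`-a.e., and Chapman–Kolmogorov turns this into `p t x A = 0 ↔ μ A = 0`.

For the convergence (Doob's theorem) split `p 1 x ≪ μ` into a part `σ ≤ M • μ` and a remainder
of small mass. With `c = σ univ`, the excess `d s = (σ P_s - c • μ) univ` is nonincreasing, and
one more step of the semigroup lowers it by the overlap of the images of the positive and negative
parts of `σ P_s - c • μ`. As every `p 1 y` dominates `μ`, a Borel–Cantelli argument bounds this
overlap from below uniformly over all pairs of measures below `M • μ` of mass at least `δ`; hence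
`d s` cannot stay above `δ`, and `d s → 0`.
-/

open MeasureTheory ProbabilityTheory Filter Set Topology
open scoped ENNReal

namespace MeasureTheory.Measure

variable {α : Type*} [MeasurableSpace α] {μ ν σ ξ ζ : Measure α}

lemma add_sub_eq_add_sub [IsFiniteMeasure μ] [IsFiniteMeasure ν] :
    μ + (ν - μ) = ν + (μ - ν) := by
  rw [← toSignedMeasure_eq_toSignedMeasure_iff (μ := μ + (ν - μ)) (ν := ν + (μ - ν)),
    toSignedMeasure_add, toSignedMeasure_add, ← sub_eq_sub_iff_add_eq_add,
    sub_eq_sub_iff_sub_eq_sub]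
  exact sub_toSignedMeasure_eq_toSignedMeasure_sub

lemma sub_eq_sub_of_add_eq_add [IsFiniteMeasure μ] [IsFiniteMeasure ν] [IsFiniteMeasure ξ]
    [IsFiniteMeasure ζ] (h : μ + ζ = ν + ξ) : μ - ν = ξ - ζ := by
  have hsigned : μ.toSignedMeasure - ν.toSignedMeasure =
      ξ.toSignedMeasure - ζ.toSignedMeasure := by
    rw [sub_eq_sub_iff_add_eq_add, ← toSignedMeasure_add, ← toSignedMeasure_add,
      toSignedMeasure_congr h, toSignedMeasure_add, toSignedMeasure_add, add_comm]
  simpa [jordanDecompositionOfToSignedMeasureSub_posPart] using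
    congrArg (fun m => m.toJordanDecomposition.posPart) hsigned

lemma sub_apply_univ_comm [IsFiniteMeasure μ] [IsFiniteMeasure ν] (h : μ univ = ν univ) :
    (μ - ν) univ = (ν - μ) univ := by
  have := congrArg (· univ) (add_sub_eq_add_sub (μ := μ) (ν := ν))
  simp only [add_apply, h] at this
  exact ((ENNReal.add_right_inj (measure_ne_top ν univ)).1 this).symm

lemma apply_le_add_sub_apply_univ [IsFiniteMeasure μ] [IsFiniteMeasure ν] (s : Set α) :
    μ s ≤ ν s + (μ - ν) univ :=
  calc μ s ≤ (μ - ν + ν) s := sub_le_iff_le_add.1 le_rfl s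
    _ ≤ ν s + (μ - ν) univ := by rw [add_apply, add_comm]; gcongr; exact subset_univ s

lemma sub_apply_univ_add_le [IsFiniteMeasure ξ] [IsFiniteMeasure ζ] {γ : ℝ≥0∞}
    (hγ : ∀ C, MeasurableSet C → γ ≤ ξ Cᶜ + ζ C) : (ξ - ζ) univ + γ ≤ ξ univ := by
  obtain ⟨H, hH⟩ := exists_isHahnDecomposition ζ ξ
  have hζξ : ζ H ≤ ξ H := by
    simpa [hH.measurableSet] using hH.le_on univ
  have hsub : (ξ - ζ) univ = ξ H - ζ H := by
    rw [← measure_add_measure_compl hH.measurableSet,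
      sub_apply_eq_zero_of_isHahnDecomposition hH.compl, add_zero, ← restrict_apply_self,
      restrict_sub_eq_restrict_sub_restrict hH.measurableSet,
      sub_apply hH.measurableSet hH.le_on, restrict_apply_self, restrict_apply_self]
  calc (ξ - ζ) univ + γ ≤ ξ H - ζ H + (ξ Hᶜ + ζ H) := by
        rw [hsub]; gcongr; exact hγ H hH.measurableSet
    _ = ξ univ := by
        rw [add_comm (ξ Hᶜ), ← add_assoc, tsub_add_cancel_of_le hζξ,
          measure_add_measure_compl hH.measurableSet]

lemma exists_frequently_mem [IsFiniteMeasure μ] {A : ℕ → Set α} (hA : ∀ n, MeasurableSet (A n))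
    {θ : ℝ≥0∞} (hθ : θ ≠ 0) (h : ∀ n, θ ≤ μ (A n)) : ∃ x, ∃ᶠ n in atTop, x ∈ A n := by
  have hlimsup : θ ≤ μ (limsup A atTop) := by
    rw [limsup_eq_iInf_iSup_of_nat]
    simp only [iInf_eq_iInter, iSup_eq_iUnion]
    rw [Antitone.measure_iInter]
    · exact le_iInf fun n => (h n).trans (measure_mono (subset_biUnion_of_mem (u := A) (le_refl n)))
    · exact fun m n hmn => biUnion_subset_biUnion_left fun i hi => hmn.trans hi
    · exact fun n => (MeasurableSet.biUnion (to_countable _) fun i _ => hA i).nullMeasurableSet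
    · exact ⟨0, measure_ne_top μ _⟩
  obtain ⟨x, hx⟩ := nonempty_of_measure_ne_zero (ne_bot_of_le_ne_bot hθ hlimsup)
  exact ⟨x, mem_limsup_iff_frequently_mem.1 hx⟩

lemma bind_mono_left {β : Type*} [MeasurableSpace β] {f : α → Measure β} (hf : Measurable f)
    (h : ξ ≤ ζ) : ξ.bind f ≤ ζ.bind f :=
  le_iff.2 fun s hs => by
    rw [bind_apply hs hf.aemeasurable, bind_apply hs hf.aemeasurable]
    exact lintegral_mono' h le_rfl

lemma exists_le_smul_of_absolutelyContinuous [IsFiniteMeasure ν] [SigmaFinite μ] (hνμ : ν ≪ μ)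
    {ε : ℝ≥0∞} (hε : ε ≠ 0) : ∃ M ≠ (⊤ : ℝ≥0∞), ∃ σ ≤ ν, σ ≤ M • μ ∧ ν univ ≤ σ univ + ε := by
  set g := ν.rnDeriv μ
  have hg : Measurable g := measurable_rnDeriv ν μ
  have htail : Tendsto (fun n : ℕ => ν {x | (n : ℝ≥0∞) < g x}) atTop (𝓝 0) := by
    have hnull : ν (⋂ n : ℕ, {x | (n : ℝ≥0∞) < g x}) = 0 := by
      refine hνμ (measure_mono_null ?_ (ae_iff.1 (rnDeriv_lt_top ν μ)))
      intro x hx hlt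
      obtain ⟨n, hn⟩ := ENNReal.exists_nat_gt hlt.ne
      exact (mem_iInter.1 hx n).not_gt hn
    rw [← hnull]
    exact tendsto_measure_iInter_atTop
      (fun n => (measurableSet_lt measurable_const hg).nullMeasurableSet)
      (fun m n hmn x (hx : (n : ℝ≥0∞) < g x) => (Nat.mono_cast hmn).trans_lt hx)
      ⟨0, measure_ne_top ν _⟩
  obtain ⟨n, hn⟩ := (htail.eventually (gt_mem_nhds (pos_iff_ne_zero.2 hε))).exists
  set S := {x | g x ≤ n}
  refine ⟨n, ENNReal.natCast_ne_top n, ν.restrict S, restrict_le_self,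
    le_iff.2 fun A hA => ?_, ?_⟩
  · calc ν.restrict S A = ∫⁻ x in A ∩ S, g x ∂μ := by
          rw [restrict_apply hA, setLIntegral_rnDeriv hνμ]
      _ ≤ ∫⁻ _ in A ∩ S, (n : ℝ≥0∞) ∂μ := setLIntegral_mono measurable_const fun x hx => hx.2
      _ ≤ ((n : ℝ≥0∞) • μ) A := by
          rw [setLIntegral_const, smul_apply, smul_eq_mul]
          gcongr
          exact inter_subset_left
  · have hSc : Sᶜ = {x | (n : ℝ≥0∞) < g x} := by ext; simp [S]
    calc ν univ ≤ ν S + ν Sᶜ := measure_univ_le_add_compl S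
      _ ≤ ν.restrict S univ + ε := by
          rw [restrict_apply_univ, hSc]
          gcongr

lemma apply_le_add_and_le_add_of_le [IsFiniteMeasure ν] [IsProbabilityMeasure μ] (hσν : σ ≤ ν)
    (hν : ν univ = 1) {A : Set α} (hA : MeasurableSet A) :
    ν A ≤ μ A + ((σ - σ univ • μ) univ + (ν univ - σ univ)) ∧
      μ A ≤ ν A + ((σ - σ univ • μ) univ + (ν univ - σ univ)) := by
  have := isFiniteMeasure_of_le ν hσν
  have := μ.smul_finite (measure_ne_top σ univ)
  have hσ₁ : σ univ ≤ 1 := hν ▸ hσν univ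
  have hμA : μ A ≤ 1 := prob_le_one
  constructor
  · calc ν A = σ A + (ν - σ) A := by rw [sub_apply hA hσν, add_tsub_cancel_of_le (hσν A)]
      _ ≤ σ A + (ν univ - σ univ) := by
          rw [← sub_apply MeasurableSet.univ hσν]; gcongr; exact subset_univ A
      _ ≤ (σ univ • μ) A + (σ - σ univ • μ) univ + (ν univ - σ univ) := by
          gcongr; exact apply_le_add_sub_apply_univ A
      _ ≤ μ A + ((σ - σ univ • μ) univ + (ν univ - σ univ)) := by
          rw [add_assoc, smul_apply, smul_eq_mul]
          gcongr
          exact mul_le_of_le_one_left' hσ₁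
  · calc μ A ≤ (σ univ + (ν univ - σ univ)) * μ A := by
          rw [add_tsub_cancel_of_le (hσν univ), hν, one_mul]
      _ ≤ (σ univ • μ) A + (ν univ - σ univ) := by
          rw [add_mul, smul_apply, smul_eq_mul]
          gcongr
          exact mul_le_of_le_one_right' hμA
      _ ≤ σ A + (σ - σ univ • μ) univ + (ν univ - σ univ) := by
          gcongr
          rw [sub_apply_univ_comm (by simp)]
          exact apply_le_add_sub_apply_univ A
      _ ≤ ν A + ((σ - σ univ • μ) univ + (ν univ - σ univ)) := by
          rw [add_assoc]; gcongr

end MeasureTheory.Measure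

lemma ENNReal.exists_lt_of_forall_add_le {u : ℕ → ℝ≥0∞} {δ γ : ℝ≥0∞} (hu : u 0 ≠ ⊤)
    (hγ : γ ≠ 0) (h : ∀ n, δ ≤ u n → u (n + 1) + γ ≤ u n) : ∃ n, u n < δ := by
  by_contra! hδ
  have hdecr : ∀ n : ℕ, u n + n * γ ≤ u 0 := by
    intro n
    induction n with
    | zero => simp
    | succ n ih =>
      calc u (n + 1) + (n + 1 : ℕ) * γ = u (n + 1) + γ + n * γ := by push_cast; ring
        _ ≤ u n + n * γ := by gcongr; exact h n (hδ n)
        _ ≤ u 0 := ih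
  obtain ⟨n, hn⟩ := ENNReal.exists_nat_mul_gt hγ hu
  exact (hn.trans_le (le_add_self.trans (hdecr n))).false

namespace ProbabilityTheory.Kernel

open MeasureTheory.Measure

variable {α : Type*} [MeasurableSpace α] {κ : Kernel α α} {μ : Measure α}

lemma exists_forall_measure_lt_or_measure_compl_lt [IsFiniteMeasure μ] (hac : ∀ y, μ ≪ κ y)
    {θ : ℝ≥0∞} (hθ : θ ≠ 0) : ∃ τ ≠ 0, ∀ C, MeasurableSet C →
      μ {y | κ y C < τ} < θ ∨ μ {y | κ y Cᶜ < τ} < θ := by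
  -- Otherwise Borel–Cantelli along a subsequence yields a set null for some `κ y` whose
  -- complement is null for some `κ z`, so both are `μ`-null.
  by_contra! h
  choose C hC hY hZ using fun n : ℕ => h (2⁻¹ ^ n) (by simp)
  obtain ⟨⟨y, z⟩, hyz⟩ := exists_frequently_mem (μ := μ.prod μ)
    (A := fun n => {y | κ y (C n) < 2⁻¹ ^ n} ×ˢ {z | κ z (C n)ᶜ < 2⁻¹ ^ n})
    (fun n => (measurableSet_lt (κ.measurable_coe (hC n)) measurable_const).prod
      (measurableSet_lt (κ.measurable_coe (hC n).compl) measurable_const))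
    (mul_ne_zero hθ hθ) (fun n => by rw [prod_prod]; exact mul_le_mul' (hY n) (hZ n))
  obtain ⟨φ, hφ, hφyz⟩ := extraction_of_frequently_atTop hyz
  have heventually : ∀ (w : α) (D : ℕ → Set α), (∀ n, κ w (D n) < 2⁻¹ ^ φ n) →
      ∀ᵐ x ∂μ, ∀ᶠ n in atTop, x ∉ D n := by
    refine fun w D hD => (hac w).ae_le (ae_eventually_notMem (ne_top_of_le_ne_top
      ((tsum_geometric_lt_top (r := 2⁻¹)).2 (by norm_num)).ne
      (ENNReal.tsum_le_tsum fun n => ?_)))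
    exact (hD n).le.trans (pow_le_pow_right_of_le_one' (by norm_num) (hφ.id_le n))
  have hnull : ∀ᵐ x ∂μ, False := by
    filter_upwards [heventually y (fun n => C (φ n)) fun n => (hφyz n).1,
      heventually z (fun n => (C (φ n))ᶜ) fun n => (hφyz n).2] with x hxC hxCc
    obtain ⟨n, hn, hnc⟩ := (hxC.and hxCc).exists
    exact hnc hn
  have hμ : μ = 0 := ae_eq_bot.1 (eventually_false_iff_eq_bot.1 hnull)
  exact hθ (le_zero_iff.1 ((hY 0).trans_eq (by simp [hμ])))

lemma mul_half_le_comp_apply {ξ : Measure α} {M δ τ : ℝ≥0∞} {C : Set α} (hC : MeasurableSet C)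
    (hξ : ξ ≤ M • μ) (hδ : δ ≤ ξ univ) (hδ_top : δ ≠ ⊤) (hμ : μ {y | κ y C < τ} < δ / 2 / M) :
    τ * (δ / 2) ≤ (κ ∘ₘ ξ) C := by
  have hsmall : ξ {y | κ y C < τ} ≤ δ / 2 :=
    calc ξ {y | κ y C < τ} ≤ M * μ {y | κ y C < τ} := hξ _
      _ ≤ M * (δ / 2 / M) := by gcongr
      _ ≤ δ / 2 := ENNReal.mul_div_le
  have hlarge : δ / 2 ≤ ξ {y | τ ≤ κ y C} := by
    have hcompl : {y | τ ≤ κ y C} = {y | κ y C < τ}ᶜ := by ext; simp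
    rw [← ENNReal.sub_half hδ_top, tsub_le_iff_left]
    calc δ ≤ ξ univ := hδ
      _ ≤ ξ {y | κ y C < τ} + ξ {y | τ ≤ κ y C} := by
          rw [hcompl]; exact measure_univ_le_add_compl _
      _ ≤ δ / 2 + ξ {y | τ ≤ κ y C} := by gcongr
  calc τ * (δ / 2) ≤ τ * ξ {y | τ ≤ κ y C} := by gcongr
    _ ≤ ∫⁻ y, κ y C ∂ξ := mul_meas_ge_le_lintegral₀ (κ.measurable_coe hC).aemeasurable τ
    _ = (κ ∘ₘ ξ) C := (bind_apply hC κ.aemeasurable).symm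

lemma exists_le_comp_apply_compl_add_comp_apply [IsFiniteMeasure μ] (hac : ∀ y, μ ≪ κ y)
    {δ M : ℝ≥0∞} (hδ : δ ≠ 0) (hδ_top : δ ≠ ⊤) (hM : M ≠ ⊤) :
    ∃ γ ≠ 0, ∀ ξ ζ : Measure α, ξ ≤ M • μ → ζ ≤ M • μ → δ ≤ ξ univ → δ ≤ ζ univ →
      ∀ C, MeasurableSet C → γ ≤ (κ ∘ₘ ξ) Cᶜ + (κ ∘ₘ ζ) C := by
  obtain ⟨τ, hτ, hτC⟩ := exists_forall_measure_lt_or_measure_compl_lt hac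
    (θ := δ / 2 / M) (by simp [hδ, hM])
  refine ⟨τ * (δ / 2), mul_ne_zero hτ (by simp [hδ]), fun ξ ζ hξ hζ hξδ hζδ C hC => ?_⟩
  rcases hτC Cᶜ hC.compl with h | h
  · exact (mul_half_le_comp_apply hC.compl hξ hξδ hδ_top h).trans le_self_add
  · rw [compl_compl] at h
    exact (mul_half_le_comp_apply hC hζ hζδ hδ_top h).trans le_add_self

lemma comp_sub_apply_univ_add_le [IsMarkovKernel κ] {ρ : Measure α} [IsFiniteMeasure ρ]
    [IsFiniteMeasure μ] (hμ : κ ∘ₘ μ = μ) {γ : ℝ≥0∞}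
    (hγ : ∀ C, MeasurableSet C → γ ≤ (κ ∘ₘ (ρ - μ)) Cᶜ + (κ ∘ₘ (μ - ρ)) C) :
    (κ ∘ₘ ρ - μ) univ + γ ≤ (ρ - μ) univ := by
  have hcomp : κ ∘ₘ ρ + κ ∘ₘ (μ - ρ) = μ + κ ∘ₘ (ρ - μ) := by
    rw [← comp_add, add_sub_eq_add_sub, comp_add, hμ]
  rw [sub_eq_sub_of_add_eq_add hcomp, ← comp_apply_univ (κ := κ) (μ := ρ - μ)]
  exact sub_apply_univ_add_le hγ

end ProbabilityTheory.Kernel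

section Topology

variable {α : Type*} [TopologicalSpace α] [MeasurableSpace α] [OpensMeasurableSpace α]

lemma Continuous.lintegral_eq_zero_iff {ν : Measure α} [ν.IsOpenPosMeasure] {f : α → ℝ≥0∞}
    (hf : Continuous f) : ∫⁻ x, f x ∂ν = 0 ↔ f = 0 := by
  rw [MeasureTheory.lintegral_eq_zero_iff hf.measurable]
  exact hf.ae_eq_iff_eq ν continuous_zero

lemma ProbabilityTheory.Kernel.isOpenPosMeasure_comp {κ : Kernel α α} {ν : Measure α} [NeZero ν]
    (hκ : ∀ x, (κ x).IsOpenPosMeasure) : (κ ∘ₘ ν).IsOpenPosMeasure := by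
  refine ⟨fun U hU hne h0 => ?_⟩
  rw [Measure.bind_apply hU.measurableSet κ.aemeasurable,
    lintegral_eq_zero_iff (κ.measurable_coe hU.measurableSet)] at h0
  obtain ⟨x, hx⟩ := h0.exists
  exact hU.measure_ne_zero (κ x) hne hx

end Topology

section MarkovSemigroup

variable {E : Type*} [MeasurableSpace E]

structure IsMarkovSemigroup (p : ℝ → E → Measure E) : Prop where
  measurable : ∀ t > 0, Measurable (p t)
  isProbabilityMeasure : ∀ t > 0, ∀ x, IsProbabilityMeasure (p t x)
  bind_eq_add : ∀ s > 0, ∀ t > 0, ∀ x, (p t x).bind (p s) = p (t + s) x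

def IsInvariantMeasure (p : ℝ → E → Measure E) (μ : Measure E) : Prop :=
  ∀ t > 0, μ.bind (p t) = μ

namespace IsMarkovSemigroup

variable {p : ℝ → E → Measure E} {μ σ ν : Measure E}

def kernel (hp : IsMarkovSemigroup p) {t : ℝ} (ht : 0 < t) : Kernel E E :=
  ⟨p t, hp.measurable t ht⟩

instance isMarkovKernel_kernel (hp : IsMarkovSemigroup p) {t : ℝ} (ht : 0 < t) :
    IsMarkovKernel (hp.kernel ht) :=
  ⟨hp.isProbabilityMeasure t ht⟩

lemma isFiniteMeasure_bind (hp : IsMarkovSemigroup p) {t : ℝ} (ht : 0 < t) (ν : Measure E)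
    [IsFiniteMeasure ν] : IsFiniteMeasure (ν.bind (p t)) :=
  inferInstanceAs (IsFiniteMeasure (hp.kernel ht ∘ₘ ν))

lemma bind_apply_univ (hp : IsMarkovSemigroup p) {t : ℝ} (ht : 0 < t) (ν : Measure E) :
    ν.bind (p t) univ = ν univ :=
  Measure.comp_apply_univ (κ := hp.kernel ht)

lemma bind_bind (hp : IsMarkovSemigroup p) {s t : ℝ} (hs : 0 < s) (ht : 0 < t) (ν : Measure E) :
    (ν.bind (p t)).bind (p s) = ν.bind (p (t + s)) := by
  rw [Measure.bind_bind (hp.measurable t ht).aemeasurable (hp.measurable s hs).aemeasurable]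
  exact congrArg _ (funext (hp.bind_eq_add s hs t ht))

lemma sub_apply_univ_add_le (hp : IsMarkovSemigroup p) (hμ : IsInvariantMeasure p μ)
    [IsFiniteMeasure μ] [IsFiniteMeasure σ] {s r : ℝ} (hs : 0 < s) (hr : 0 < r) {γ : ℝ≥0∞}
    (hγ : ∀ C, MeasurableSet C → γ ≤ ((σ.bind (p s) - σ univ • μ).bind (p r)) Cᶜ +
      ((σ univ • μ - σ.bind (p s)).bind (p r)) C) :
    (σ.bind (p (s + r)) - σ univ • μ) univ + γ ≤ (σ.bind (p s) - σ univ • μ) univ := by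
  have := hp.isFiniteMeasure_bind hs σ
  have := μ.smul_finite (measure_ne_top σ univ)
  rw [← hp.bind_bind hr hs]
  refine (hp.kernel hr).comp_sub_apply_univ_add_le ?_ hγ
  rw [Measure.comp_smul]
  exact congrArg _ (hμ r hr)

lemma antitoneOn_sub_apply_univ (hp : IsMarkovSemigroup p) (hμ : IsInvariantMeasure p μ)
    [IsFiniteMeasure μ] [IsFiniteMeasure σ] :
    AntitoneOn (fun s => (σ.bind (p s) - σ univ • μ) univ) (Ioi 0) := by
  intro s hs r _ hsr
  rcases hsr.eq_or_lt with rfl | hlt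
  · rfl
  · have := hp.sub_apply_univ_add_le hμ hs (sub_pos.2 hlt) (σ := σ) (γ := 0)
      fun _ _ => zero_le
    rwa [add_sub_cancel, add_zero] at this

lemma exists_add_le_sub_apply_univ (hp : IsMarkovSemigroup p) (hμ : IsInvariantMeasure p μ)
    [IsProbabilityMeasure μ] (hac : ∀ y, μ ≪ p 1 y) [IsFiniteMeasure σ] {M : ℝ≥0∞}
    (hσ : σ ≤ M • μ) (hM : M ≠ ⊤) {δ : ℝ≥0∞} (hδ : δ ≠ 0) (hδ_top : δ ≠ ⊤) :
    ∃ γ ≠ 0, ∀ s > 0, δ ≤ (σ.bind (p s) - σ univ • μ) univ →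
      (σ.bind (p (s + 1)) - σ univ • μ) univ + γ ≤ (σ.bind (p s) - σ univ • μ) univ := by
  obtain ⟨γ, hγ, hoverlap⟩ :=
    (hp.kernel one_pos).exists_le_comp_apply_compl_add_comp_apply hac hδ hδ_top hM
  refine ⟨γ, hγ, fun s hs hδs =>
    hp.sub_apply_univ_add_le hμ hs one_pos (hoverlap _ _ ?_ ?_ hδs ?_)⟩
  · calc σ.bind (p s) - σ univ • μ ≤ σ.bind (p s) := Measure.sub_le
      _ ≤ (M • μ).bind (p s) := Measure.bind_mono_left (hp.measurable s hs) hσ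
      _ = M • μ := by rw [Measure.bind_smul, hμ s hs]
  · refine Measure.sub_le.trans (IsOrderedSMul.smul_le_smul_right _ _ ?_ μ)
    simpa using hσ univ
  · have := hp.isFiniteMeasure_bind hs σ
    have := μ.smul_finite (measure_ne_top σ univ)
    rwa [← Measure.sub_apply_univ_comm (by simp [hp.bind_apply_univ hs])]

lemma tendsto_sub_apply_univ (hp : IsMarkovSemigroup p) (hμ : IsInvariantMeasure p μ)
    [IsProbabilityMeasure μ] (hac : ∀ y, μ ≪ p 1 y) [IsFiniteMeasure σ] {M : ℝ≥0∞}
    (hσ : σ ≤ M • μ) (hM : M ≠ ⊤) :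
    Tendsto (fun s => (σ.bind (p s) - σ univ • μ) univ) atTop (𝓝 0) := by
  rw [ENNReal.tendsto_nhds_zero]
  intro ε hε
  obtain ⟨γ, hγ, hdrop⟩ := hp.exists_add_le_sub_apply_univ hμ hac hσ hM (δ := min ε 1)
    (lt_min hε one_pos).ne' (min_lt_of_right_lt ENNReal.one_lt_top).ne
  have hfinite : (σ.bind (p 1) - σ univ • μ) univ ≠ ⊤ :=
    ne_top_of_le_ne_top (measure_ne_top σ univ)
      ((Measure.sub_le (μ := σ.bind (p 1)) univ).trans_eq (hp.bind_apply_univ one_pos σ))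
  obtain ⟨n, hn⟩ := ENNReal.exists_lt_of_forall_add_le
    (u := fun n : ℕ => (σ.bind (p (n + 1)) - σ univ • μ) univ) (by simpa using hfinite) hγ
    fun n h => by simpa [add_assoc, one_add_one_eq_two] using hdrop (n + 1) (by positivity) h
  filter_upwards [eventually_ge_atTop ((n : ℝ) + 1)] with s hs
  exact (hp.antitoneOn_sub_apply_univ hμ (by positivity : (0 : ℝ) < n + 1)
    ((by positivity : (0 : ℝ) < n + 1).trans_le hs) hs).trans (hn.le.trans (min_le_left _ _))

lemma tendsto_bind_apply (hp : IsMarkovSemigroup p) (hμ : IsInvariantMeasure p μ)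
    [IsProbabilityMeasure μ] (hac : ∀ y, μ ≪ p 1 y) [IsProbabilityMeasure ν] (hνμ : ν ≪ μ)
    {A : Set E} (hA : MeasurableSet A) :
    Tendsto (fun s => ν.bind (p s) A) atTop (𝓝 (μ A)) := by
  rw [ENNReal.tendsto_nhds (measure_ne_top μ A)]
  intro ε hε
  have hε₂ : 0 < ε / 2 := ENNReal.half_pos hε.ne'
  obtain ⟨M, hM, σ, hσν, hσM, hνσ⟩ := Measure.exists_le_smul_of_absolutelyContinuous hνμ hε₂.ne'
  have := isFiniteMeasure_of_le ν hσν
  filter_upwards [(hp.tendsto_sub_apply_univ hμ hac hσM hM).eventually (eventually_le_nhds hε₂),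
    eventually_gt_atTop 0] with s hds hs
  have := hp.isFiniteMeasure_bind hs ν
  have hbound := Measure.apply_le_add_and_le_add_of_le (μ := μ)
    (Measure.bind_mono_left (hp.measurable s hs) hσν)
    (by rw [hp.bind_apply_univ hs, measure_univ]) hA
  rw [hp.bind_apply_univ hs, hp.bind_apply_univ hs] at hbound
  have herr : (σ.bind (p s) - σ univ • μ) univ + (ν univ - σ univ) ≤ ε := by
    rw [← ENNReal.add_halves ε]
    gcongr
    exact tsub_le_iff_left.2 hνσ
  exact ⟨tsub_le_iff_right.2 (hbound.2.trans (by gcongr)), hbound.1.trans (by gcongr)⟩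

end IsMarkovSemigroup

end MarkovSemigroup

section StrongFeller

variable {E : Type*} [TopologicalSpace E] [MeasurableSpace E] [OpensMeasurableSpace E]
  {p : ℝ → E → Measure E} {μ : Measure E}

lemma IsInvariantMeasure.isOpenPosMeasure (hμ : IsInvariantMeasure p μ)
    (hp : IsMarkovSemigroup p) [NeZero μ] (hirr : ∀ t > 0, ∀ x, (p t x).IsOpenPosMeasure) :
    μ.IsOpenPosMeasure :=
  hμ 1 one_pos ▸ (hp.kernel one_pos).isOpenPosMeasure_comp (hirr 1 one_pos)

lemma IsMarkovSemigroup.apply_eq_zero_iff (hp : IsMarkovSemigroup p)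
    (hμ : IsInvariantMeasure p μ) [μ.IsOpenPosMeasure]
    (hirr : ∀ t > 0, ∀ x, (p t x).IsOpenPosMeasure)
    (hSF : ∀ t > 0, ∀ A, MeasurableSet A → Continuous fun x => p t x A)
    {t : ℝ} (ht : 0 < t) {A : Set E} (hA : MeasurableSet A) (x : E) :
    p t x A = 0 ↔ μ A = 0 := by
  have ht₂ : 0 < t / 2 := half_pos ht
  have := hirr _ ht₂ x
  have hf := hSF _ ht₂ A hA
  rw [← add_halves t, ← hp.bind_eq_add _ ht₂ _ ht₂, ← hμ _ ht₂,
    Measure.bind_apply hA (hp.measurable _ ht₂).aemeasurable,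
    Measure.bind_apply hA (hp.measurable _ ht₂).aemeasurable,
    hf.lintegral_eq_zero_iff, hf.lintegral_eq_zero_iff]

end StrongFeller

theorem invariant_measure_equivalent_and_ergodic_general
    {E : Type*} [TopologicalSpace E] [MeasurableSpace E] [BorelSpace E]
    (p : ℝ → E → Measure E)
    -- each `p t x` is a probability measure
    (hprob : ∀ t > (0 : ℝ), ∀ x : E, IsProbabilityMeasure (p t x))
    -- measurability in the space variable
    (hmeas : ∀ t > (0 : ℝ), ∀ A : Set E, MeasurableSet A →
      Measurable (fun x => p t x A))
    -- Chapman–Kolmogorov identity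
    (hCK : ∀ s > (0 : ℝ), ∀ t > (0 : ℝ), ∀ (x : E) (A : Set E), MeasurableSet A →
      p (t + s) x A = ∫⁻ y, p s y A ∂(p t x))
    -- irreducibility
    (hirr : ∀ t > (0 : ℝ), ∀ x : E, ∀ U : Set E, IsOpen U → U.Nonempty →
      0 < p t x U)
    -- strong Feller property
    (hSF : ∀ t > (0 : ℝ), ∀ A : Set E, MeasurableSet A →
      Continuous (fun x => p t x A))
    -- `μ` is an invariant probability measure
    (μ : Measure E) (hμprob : IsProbabilityMeasure μ)
    (hinv : ∀ t > (0 : ℝ), ∀ A : Set E, MeasurableSet A →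
      ∫⁻ x, p t x A ∂μ = μ A) :
    (∀ t > (0 : ℝ), ∀ x : E, μ ≪ p t x ∧ p t x ≪ μ) ∧
    (∀ x : E, ∀ A : Set E, MeasurableSet A →
      Tendsto (fun t => p t x A) atTop (nhds (μ A))) := by
  have hkernel : ∀ t > (0 : ℝ), Measurable (p t) := fun t ht =>
    Measure.measurable_of_measurable_coe _ (hmeas t ht)
  have hp : IsMarkovSemigroup p := ⟨hkernel, hprob, fun s hs t ht x => Measure.ext fun A hA => by
    rw [Measure.bind_apply hA (hkernel s hs).aemeasurable, hCK s hs t ht x A hA]⟩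
  have hμ : IsInvariantMeasure p μ := fun t ht => Measure.ext fun A hA => by
    rw [Measure.bind_apply hA (hkernel t ht).aemeasurable, hinv t ht A hA]
  have hirr' : ∀ t > (0 : ℝ), ∀ x, (p t x).IsOpenPosMeasure := fun t ht x =>
    ⟨fun U hU hne => (hirr t ht x U hU hne).ne'⟩
  have := hμ.isOpenPosMeasure hp hirr'
  have hequiv : ∀ t > (0 : ℝ), ∀ x, μ ≪ p t x ∧ p t x ≪ μ := fun t ht x =>
    ⟨.mk fun A hA h => (hp.apply_eq_zero_iff hμ hirr' hSF ht hA x).1 h,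
      .mk fun A hA h => (hp.apply_eq_zero_iff hμ hirr' hSF ht hA x).2 h⟩
  refine ⟨hequiv, fun x A hA => ?_⟩
  have := hprob 1 one_pos x
  have hlim := hp.tendsto_bind_apply hμ (fun y => (hequiv 1 one_pos y).1)
    (hequiv 1 one_pos x).2 hA
  refine (hlim.comp (tendsto_atTop_add_const_right _ (-1) tendsto_id)).congr' ?_
  filter_upwards [eventually_gt_atTop 1] with t ht
  rw [Function.comp_apply, id, hp.bind_eq_add _ (by linarith) _ one_pos]
  ring_nf

/-- If a Markov semigroup of probability transition kernels on a Hausdorff space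
(with its Borel σ-algebra) is irreducible and strong Feller, and `μ` is an invariant
probability measure for it, then `μ` is equivalent to each `p t x` (for `t > 0`),
and `p t x A → μ A` as `t → ∞` for every Borel set `A`. -/
theorem invariant_measure_equivalent_and_ergodic
    {E : Type*} [TopologicalSpace E] [T2Space E] [MeasurableSpace E] [BorelSpace E]
    (p : ℝ → E → Measure E)
    -- each `p t x` is a probability measure
    (hprob : ∀ t > (0 : ℝ), ∀ x : E, IsProbabilityMeasure (p t x))
    -- measurability in the space variable
    (hmeas : ∀ t > (0 : ℝ), ∀ A : Set E, MeasurableSet A →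
      Measurable (fun x => p t x A))
    -- Chapman–Kolmogorov identity
    (hCK : ∀ s > (0 : ℝ), ∀ t > (0 : ℝ), ∀ (x : E) (A : Set E), MeasurableSet A →
      p (t + s) x A = ∫⁻ y, p s y A ∂(p t x))
    -- irreducibility
    (hirr : ∀ t > (0 : ℝ), ∀ x : E, ∀ U : Set E, IsOpen U → U.Nonempty →
      0 < p t x U)
    -- strong Feller property
    (hSF : ∀ t > (0 : ℝ), ∀ A : Set E, MeasurableSet A →
      Continuous (fun x => p t x A))
    -- `μ` is an invariant probability measure
    (μ : Measure E) (hμprob : IsProbabilityMeasure μ)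
    (hinv : ∀ t > (0 : ℝ), ∀ A : Set E, MeasurableSet A →
      ∫⁻ x, p t x A ∂μ = μ A) :
    (∀ t > (0 : ℝ), ∀ x : E, μ ≪ p t x ∧ p t x ≪ μ) ∧
    (∀ x : E, ∀ A : Set E, MeasurableSet A →
      Tendsto (fun t => p t x A) atTop (nhds (μ A))) :=
  invariant_measure_equivalent_and_ergodic_general p hprob hmeas hCK hirr hSF μ hμprob hinv
end

section
/- Let κ : (0,∞) → (0,∞) be a positive continuous function that is bounded on [1,∞) and satisfies lim_{x↓0} κ(x)/log(x^{-1}) = δ₀ for some finite δ₀ ≥ 0. Then there exist δ ∈ (0,1) and a constant C ≥ 1 such that x²κ(x) ≤ C·ρ_δ(x²) for all x > 0, where ρ_δ : (0,∞) → (0,∞) is the concave function defined by ρ_δ(y) = y·log(y^{-1}) for 0 < y ≤ δ and ρ_δ(y) = (log(δ^{-1}) − 1)·y + δ for y > δ. -/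
/-- The concave function `ρ_δ` on `(0, ∞)`:
`ρ_δ(y) = y log(1/y)` for `y ≤ δ` and `ρ_δ(y) = (log(1/δ) - 1) y + δ` for `y > δ`. -/
noncomputable def rhoDelta (δ y : ℝ) : ℝ :=
  if y ≤ δ then y * Real.log y⁻¹ else (Real.log δ⁻¹ - 1) * y + δ

/-- Let `κ : (0,∞) → (0,∞)` be positive and continuous, bounded on `[1,∞)`, with
`κ(x)/log(1/x) → δ₀ < ∞` as `x ↓ 0`. Then there are `δ ∈ (0,1)` and `C ≥ 1` such
that `x² κ(x) ≤ C ρ_δ(x²)` for all `x > 0`. -/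
theorem sq_mul_kappa_le_rho
    (κ : ℝ → ℝ) (δ₀ : ℝ) (hδ₀ : 0 ≤ δ₀)
    (hpos : ∀ x > (0 : ℝ), 0 < κ x)
    (hcont : ContinuousOn κ (Set.Ioi (0 : ℝ)))
    (hbdd : ∃ M : ℝ, ∀ x ≥ (1 : ℝ), κ x ≤ M)
    (hlim : Filter.Tendsto (fun x => κ x / Real.log x⁻¹)
      (nhdsWithin 0 (Set.Ioi 0)) (nhds δ₀)) :
    ∃ δ ∈ Set.Ioo (0 : ℝ) 1, ∃ C ≥ (1 : ℝ),
      ∀ x > (0 : ℝ), x ^ 2 * κ x ≤ C * rhoDelta δ (x ^ 2) := by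
  obtain ⟨M, hM⟩ := hbdd
  have h1 : ∀ᶠ x in nhdsWithin 0 (Set.Ioi 0), κ x / Real.log x⁻¹ ≤ δ₀ + 1 :=
    hlim.eventually (eventually_le_nhds (lt_add_one δ₀))
  rw [eventually_nhdsWithin_iff] at h1
  obtain ⟨a, hapos, hA⟩ := Metric.eventually_nhds_iff.mp h1
  set δ : ℝ := min ((a / 2) ^ 2) (Real.exp (-2)) with hδdef
  have hδpos : 0 < δ := lt_min (by positivity) (Real.exp_pos _)
  have hδexp : δ ≤ Real.exp (-2) := min_le_right _ _
  have hδlt1 : δ < 1 := lt_of_le_of_lt hδexp (by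
    rw [Real.exp_lt_one_iff]; norm_num)
  have hlogδ : 2 ≤ Real.log δ⁻¹ := by
    rw [Real.log_inv]
    have : Real.log δ ≤ Real.log (Real.exp (-2)) :=
      Real.log_le_log hδpos hδexp
    rw [Real.log_exp] at this
    linarith
  -- bound on the compact set [√δ, 1]
  have hsub : Set.Icc (Real.sqrt δ) 1 ⊆ Set.Ioi (0 : ℝ) := by
    intro y hy
    exact lt_of_lt_of_le (Real.sqrt_pos.mpr hδpos) hy.1
  have hbdd1 : BddAbove (κ '' Set.Icc (Real.sqrt δ) 1) :=
    (isCompact_Icc.image_of_continuousOn (hcont.mono hsub)).bddAbove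
  obtain ⟨M₁, hM₁⟩ := hbdd1
  set C : ℝ := max 1 (max ((δ₀ + 1) / 2) (max M M₁)) with hCdef
  have hC1 : (1 : ℝ) ≤ C := le_max_left _ _
  have hC0 : (0 : ℝ) ≤ C := by linarith
  refine ⟨δ, ⟨hδpos, hδlt1⟩, C, hC1, ?_⟩
  intro x hx
  by_cases hcase : x ^ 2 ≤ δ
  · -- small x
    have hx1 : x < 1 := by
      nlinarith [hδlt1]
    have hxa : x < a := by
      have hxa2 : x ≤ a / 2 := by
        have := le_trans hcase (min_le_left _ _)
        nlinarith
      linarith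
    have hlogx : 0 < Real.log x⁻¹ := by
      rw [Real.log_inv]
      have := Real.log_neg hx hx1
      linarith
    have hκ : κ x ≤ (δ₀ + 1) * Real.log x⁻¹ := by
      have := hA (y := x) (by simpa [Real.dist_eq, abs_of_pos hx] using hxa) hx
      exact (div_le_iff₀ hlogx).mp this
    have hρ : rhoDelta δ (x ^ 2) = x ^ 2 * (2 * Real.log x⁻¹) := by
      rw [rhoDelta, if_pos hcase]
      congr 1
      rw [Real.log_inv, Real.log_inv, Real.log_pow]
      push_cast
      ring
    rw [hρ]
    have hC2 : (δ₀ + 1) / 2 ≤ C := le_trans (le_max_left _ _) (le_max_right _ _)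
    have hx2 : (0 : ℝ) ≤ x ^ 2 := sq_nonneg x
    calc x ^ 2 * κ x ≤ x ^ 2 * ((δ₀ + 1) * Real.log x⁻¹) := by
          exact mul_le_mul_of_nonneg_left hκ hx2
      _ = (δ₀ + 1) / 2 * (x ^ 2 * (2 * Real.log x⁻¹)) := by ring
      _ ≤ C * (x ^ 2 * (2 * Real.log x⁻¹)) := by
          apply mul_le_mul_of_nonneg_right hC2
          positivity
  · -- large x
    push_neg at hcase
    have hρ : rhoDelta δ (x ^ 2) = (Real.log δ⁻¹ - 1) * x ^ 2 + δ := by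
      rw [rhoDelta, if_neg (not_le.mpr hcase)]
    have hρge : x ^ 2 ≤ rhoDelta δ (x ^ 2) := by
      rw [hρ]
      nlinarith [sq_nonneg x, hδpos]
    have hxδ : Real.sqrt δ < x := (Real.sqrt_lt' hx).mpr hcase
    have hκC : κ x ≤ C := by
      rcases le_or_gt 1 x with h1 | h1
      · exact le_trans (hM x h1) (le_trans (le_max_left _ _)
          (le_trans (le_max_right _ _) (le_max_right _ _)))
      · have : κ x ≤ M₁ := hM₁ ⟨x, ⟨le_of_lt hxδ, le_of_lt h1⟩, rfl⟩
        exact le_trans this (le_trans (le_max_right _ _)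
          (le_trans (le_max_right _ _) (le_max_right _ _)))
    calc x ^ 2 * κ x ≤ x ^ 2 * C := mul_le_mul_of_nonneg_left hκC (sq_nonneg x)
      _ = C * x ^ 2 := by ring
      _ ≤ C * rhoDelta δ (x ^ 2) := mul_le_mul_of_nonneg_left hρge hC0
end

section
/- Let g : [0,∞) → ℝ be g(r) = r/(1+r). Let x, y ∈ ℝ^d with x ≠ y, let 0 ≤ L < 1, and let v ∈ ℝ^d with |v| ≤ L·|x−y|. Then g(|x − y + v|) − g(|x − y|) − g′(|x−y|)·⟨(x−y)/|x−y|, v⟩ ≤ (L²/(1−L))·|x−y|, where g′(r) = 1/(1+r)². -/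
/-!
With `e = x - y`, `r = ‖e‖` and `a = r + ⟪e, v⟫ / r = ⟪e / r, e + v⟫`, concavity of
`g(r) = r / (1 + r)` bounds the left-hand side by `g'(r) (‖e + v‖ - a)`, and `0 < g'(r) ≤ 1`.
The gap `‖e + v‖ - a` between a vector's norm and its component along `e` is controlled by
`‖e + v‖² - a² ≤ ‖v‖² ≤ L² r²` together with `a ≥ r - ‖v‖ ≥ (1 - L) r`.
-/

open RealInnerProductSpace

lemma div_one_add_sub_div_one_add_le {r s : ℝ} (hr : 0 ≤ r) (hs : 0 ≤ s) :
    s / (1 + s) - r / (1 + r) ≤ 1 / (1 + r) ^ 2 * (s - r) := by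
  have key : 1 / (1 + r) ^ 2 * (s - r) - (s / (1 + s) - r / (1 + r))
      = (s - r) ^ 2 / ((1 + s) * (1 + r) ^ 2) := by
    field_simp
    ring
  have : 0 ≤ (s - r) ^ 2 / ((1 + s) * (1 + r) ^ 2) := by positivity
  linarith

lemma sub_le_div_of_sq_sub_sq_le {s a b c : ℝ} (hs : 0 ≤ s) (hc : 0 < c) (hca : c ≤ a)
    (hb : 0 ≤ b) (hsa : s ^ 2 - a ^ 2 ≤ b) : s - a ≤ b / c := by
  rw [le_div_iff₀ hc]
  rcases le_or_gt (s - a) 0 with h | h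
  · nlinarith
  · nlinarith

section InnerProductSpace

variable {E : Type*} [NormedAddCommGroup E] [InnerProductSpace ℝ E]

lemma neg_norm_le_inner_div_norm (x v : E) : -‖v‖ ≤ ⟪x, v⟫ / ‖x‖ := by
  rcases eq_or_ne x 0 with rfl | hx
  · simp
  · rw [le_div_iff₀ (norm_pos_iff.2 hx), neg_mul, mul_comm]
    exact neg_le_of_abs_le (abs_real_inner_le_norm x v)

lemma sq_norm_add_sub_sq_le {x : E} (hx : x ≠ 0) (v : E) :
    ‖x + v‖ ^ 2 - (‖x‖ + ⟪x, v⟫ / ‖x‖) ^ 2 ≤ ‖v‖ ^ 2 := by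
  have hx' : ‖x‖ ≠ 0 := norm_ne_zero_iff.2 hx
  have : ‖x + v‖ ^ 2 - (‖x‖ + ⟪x, v⟫ / ‖x‖) ^ 2 = ‖v‖ ^ 2 - (⟪x, v⟫ / ‖x‖) ^ 2 := by
    rw [norm_add_sq_real]
    field_simp
    ring
  rw [this]
  nlinarith [sq_nonneg (⟪x, v⟫ / ‖x‖)]

lemma norm_add_le_norm_add_inner_div_norm_add {x v : E} (hx : x ≠ 0) {L : ℝ} (hL : L < 1)
    (hv : ‖v‖ ≤ L * ‖x‖) :
    ‖x + v‖ ≤ ‖x‖ + ⟪x, v⟫ / ‖x‖ + L ^ 2 / (1 - L) * ‖x‖ := by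
  have hxpos : 0 < ‖x‖ := norm_pos_iff.2 hx
  have hsq : ‖v‖ ^ 2 ≤ L ^ 2 * ‖x‖ ^ 2 := by
    rw [← mul_pow]
    exact pow_le_pow_left₀ (norm_nonneg v) hv 2
  have hgap := sub_le_div_of_sq_sub_sq_le (norm_nonneg (x + v))
    (mul_pos (sub_pos.2 hL) hxpos) (by linarith [neg_norm_le_inner_div_norm x v])
    (by positivity) ((sq_norm_add_sub_sq_le hx v).trans hsq)
  have : L ^ 2 * ‖x‖ ^ 2 / ((1 - L) * ‖x‖) = L ^ 2 / (1 - L) * ‖x‖ := by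
    field_simp
  linarith

end InnerProductSpace

theorem g_taylor_jump_estimate_general
    {d : ℕ} (x y v : EuclideanSpace ℝ (Fin d)) (hxy : x ≠ y)
    (L : ℝ) (hL1 : L < 1)
    (hv : ‖v‖ ≤ L * ‖x - y‖) :
    ‖x - y + v‖ / (1 + ‖x - y + v‖) - ‖x - y‖ / (1 + ‖x - y‖)
        - (1 / (1 + ‖x - y‖) ^ 2) * ((inner ℝ (x - y) v : ℝ) / ‖x - y‖)
      ≤ (L ^ 2 / (1 - L)) * ‖x - y‖ := by
  set r := ‖x - y‖
  set gap := ‖x - y + v‖ - (r + ⟪x - y, v⟫ / r)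
  have hgap : gap ≤ L ^ 2 / (1 - L) * r := by
    have := norm_add_le_norm_add_inner_div_norm_add (sub_ne_zero.2 hxy) hL1 hv
    linarith
  have hconcave := div_one_add_sub_div_one_add_le (norm_nonneg (x - y)) (norm_nonneg (x - y + v))
  have hslope : 1 / (1 + r) ^ 2 ≤ 1 := by
    rw [div_le_one (by positivity)]
    nlinarith [norm_nonneg (x - y)]
  have hbound : 0 ≤ L ^ 2 / (1 - L) * r := by
    have : 0 < 1 - L := by linarith
    positivity
  calc _ ≤ 1 / (1 + r) ^ 2 * gap := by linarith
    _ ≤ L ^ 2 / (1 - L) * r := by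
      rcases le_or_gt gap 0 with h | h
      · exact (mul_nonpos_of_nonneg_of_nonpos (by positivity) h).trans hbound
      · exact (mul_le_of_le_one_left h.le hslope).trans hgap

/-- Let `g(r) = r/(1+r)` with `g'(r) = 1/(1+r)²`. For `x ≠ y` in `ℝ^d`, `0 ≤ L < 1`
and `v` with `|v| ≤ L |x - y|`, one has
`g(|x - y + v|) - g(|x - y|) - g'(|x - y|) ⟨(x-y)/|x-y|, v⟩ ≤ (L²/(1-L)) |x - y|`. -/
theorem g_taylor_jump_estimate
    {d : ℕ} (x y v : EuclideanSpace ℝ (Fin d)) (hxy : x ≠ y)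
    (L : ℝ) (hL0 : 0 ≤ L) (hL1 : L < 1)
    (hv : ‖v‖ ≤ L * ‖x - y‖) :
    ‖x - y + v‖ / (1 + ‖x - y + v‖) - ‖x - y‖ / (1 + ‖x - y‖)
        - (1 / (1 + ‖x - y‖) ^ 2) * ((inner ℝ (x - y) v : ℝ) / ‖x - y‖)
      ≤ (L ^ 2 / (1 - L)) * ‖x - y‖ :=
  g_taylor_jump_estimate_general x y v hxy L hL1 hv
end

section
/- Let r > 2, λ₃ > 0 and λ₄ ≥ 0, and let f : [0,∞) → [0,∞) be a differentiable function satisfying f′(t) ≤ −λ₃·f(t)^{r/2} + λ₄ for all t > 0. Then there exists a constant C > 0 depending only on r, λ₃ and λ₄ (and in particular independent of the initial value f(0)) such that f(t) ≤ C·(1 + t^{1/(1 − r/2)}) for all t > 0; note 1/(1 − r/2) = −2/(r−2), so the bound reads f(t) ≤ C·(1 + t^{−2/(r−2)}). -/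
set_option maxHeartbeats 1000000 in
/-- Let `r > 2`, `λ₃ > 0`, `λ₄ ≥ 0`. There is a constant `C > 0` depending only on
`r, λ₃, λ₄` (in particular independent of the initial value `f 0`) such that every
differentiable `f : [0,∞) → [0,∞)` with `f'(t) ≤ -λ₃ f(t)^{r/2} + λ₄` for `t > 0`
satisfies `f(t) ≤ C (1 + t^{1/(1 - r/2)}) = C (1 + t^{-2/(r-2)})` for all `t > 0`. -/
theorem ode_comparison_polynomial_decay
    (r lam₃ lam₄ : ℝ) (hr : 2 < r) (hlam₃ : 0 < lam₃) (hlam₄ : 0 ≤ lam₄) :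
    ∃ C > (0 : ℝ), ∀ f f' : ℝ → ℝ,
      (∀ t ≥ (0 : ℝ), 0 ≤ f t) →
      (∀ t ≥ (0 : ℝ), HasDerivWithinAt f (f' t) (Set.Ici 0) t) →
      (∀ t > (0 : ℝ), f' t ≤ -lam₃ * (f t) ^ (r / 2) + lam₄) →
      ∀ t > (0 : ℝ), f t ≤ C * (1 + t ^ (1 / (1 - r / 2))) := by
  -- notation
  set e : ℝ := 1 / (1 - r / 2) with he
  set α : ℝ := 2 / (r - 2) with hαdef
  have hr2 : (0:ℝ) < r - 2 := by linarith
  have hr0 : (0:ℝ) < r := by linarith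
  have hne : (1:ℝ) - r / 2 ≠ 0 := by intro h; linarith
  have hne2 : r - 2 ≠ 0 := hr2.ne'
  have hne3 : (2:ℝ) - r ≠ 0 := by intro h; linarith
  have hα_pos : 0 < α := by positivity
  have hαe : e = -α := by
    rw [he, hαdef]; field_simp; ring
  have hαr : α * (r / 2) = α + 1 := by
    rw [hαdef]; field_simp; ring
  -- the constants
  set A : ℝ := max 1 ((2 * α / lam₃ + 1) ^ (1 / (r / 2 - 1))) with hAdef
  set K : ℝ := (2 * lam₄ / lam₃ + 1) ^ (2 / r) with hKdef
  have hA1 : (1:ℝ) ≤ A := le_max_left _ _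
  have hA0 : (0:ℝ) < A := lt_of_lt_of_le one_pos hA1
  have hK0 : (0:ℝ) < K := by
    apply Real.rpow_pos_of_pos; positivity
  -- key estimate on K
  have hKr : lam₄ < lam₃ / 2 * K ^ (r / 2) := by
    have hb : (0:ℝ) ≤ 2 * lam₄ / lam₃ + 1 := by positivity
    have hK1 : K ^ (r / 2) = (2 * lam₄ / lam₃ + 1) := by
      rw [hKdef, ← Real.rpow_mul hb,
        show 2 / r * (r / 2) = 1 by field_simp, Real.rpow_one]
    rw [hK1]
    have : lam₃ / 2 * (2 * lam₄ / lam₃ + 1) = lam₄ + lam₃ / 2 := by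
      field_simp
    rw [this]; linarith
  -- key estimate on A
  have hAr : α < lam₃ / 2 * A ^ (r / 2 - 1) := by
    have hb : (0:ℝ) ≤ 2 * α / lam₃ + 1 := by positivity
    have hp : 0 < r / 2 - 1 := by linarith
    have h1 : (2 * α / lam₃ + 1) ≤ A ^ (r / 2 - 1) := by
      have h := Real.rpow_le_rpow (Real.rpow_nonneg hb _) (le_max_right (1:ℝ) ((2 * α / lam₃ + 1) ^ (1 / (r / 2 - 1)))) hp.le
      rwa [← Real.rpow_mul hb, show 1 / (r / 2 - 1) * (r / 2 - 1) = 1 by field_simp,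
        Real.rpow_one, ← hAdef] at h
    have h2 : lam₃ / 2 * (2 * α / lam₃ + 1) ≤ lam₃ / 2 * A ^ (r / 2 - 1) :=
      mul_le_mul_of_nonneg_left h1 (by positivity)
    have h3 : lam₃ / 2 * (2 * α / lam₃ + 1) = α + lam₃ / 2 := by field_simp
    linarith [h3 ▸ h2]
  refine ⟨A + K, by positivity, ?_⟩
  intro f f' hf0 hderiv hode t ht
  -- continuity of f on [0, t]
  have hcont : ContinuousOn f (Set.Icc 0 t) := fun x hx =>
    ((hderiv x hx.1).continuousWithinAt).mono (fun y hy => hy.1)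
  obtain ⟨M, hM⟩ := (isCompact_Icc (a := (0:ℝ)) (b := t)).exists_bound_of_continuousOn hcont
  set M' : ℝ := max M 1 with hM'def
  have hM'0 : (0:ℝ) < M' := lt_of_lt_of_le one_pos (le_max_right _ _)
  have hfM : ∀ x ∈ Set.Icc (0:ℝ) t, f x ≤ M' := fun x hx =>
    le_trans (le_trans (le_abs_self _) (hM x hx)) (le_max_left _ _)
  -- choice of the starting point a
  set a : ℝ := min (t / 2) ((A / M') ^ (1 / α)) with hadef
  have ha0 : 0 < a := by
    apply lt_min (by linarith)
    apply Real.rpow_pos_of_pos; positivity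
  have hat : a < t := lt_of_le_of_lt (min_le_left _ _) (by linarith)
  -- B a is at least M'
  have haB : M' ≤ A * a ^ e := by
    have h1 : a ^ α ≤ A / M' := by
      have h := Real.rpow_le_rpow ha0.le (min_le_right (t/2) ((A / M') ^ (1 / α))) hα_pos.le
      rwa [← Real.rpow_mul (by positivity), show 1 / α * α = 1 by field_simp,
        Real.rpow_one] at h
    have haα : 0 < a ^ α := Real.rpow_pos_of_pos ha0 _
    have h1' : a ^ α * M' ≤ A := (le_div_iff₀ hM'0).mp h1
    rw [hαe, Real.rpow_neg ha0.le, ← div_eq_mul_inv]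
    exact (le_div_iff₀ haα).mpr (by nlinarith [h1'])
  -- the barrier function
  set B : ℝ → ℝ := fun s => A * s ^ e + K with hBdef
  set B' : ℝ → ℝ := fun s => A * (e * s ^ (e - 1)) with hB'def
  have hBd : ∀ x : ℝ, 0 < x → HasDerivAt B (B' x) x := by
    intro x hx
    exact ((Real.hasDerivAt_rpow_const (Or.inl hx.ne')).const_mul A).add_const K
  have hexp : e * (r / 2) = e - 1 := by rw [hαe]; linarith [hαr]
  -- apply the fencing theorem on [a, t]
  have key : f t ≤ B t := by
    have happ := image_le_of_deriv_right_lt_deriv_boundary' (f := f) (f' := f') (a := a) (b := t)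
      (hcont.mono (Set.Icc_subset_Icc ha0.le le_rfl))
      (fun x hx => (hderiv x (ha0.le.trans hx.1)).mono (Set.Ici_subset_Ici.2 (ha0.le.trans hx.1)))
      (B := B) (B' := B')
      ?_ ?_ ?_ ?_
    · exact happ (Set.right_mem_Icc.2 hat.le)
    · -- f a ≤ B a
      have hfa := hfM a ⟨ha0.le, hat.le⟩
      have hBa : B a = A * a ^ e + K := rfl
      rw [hBa]; linarith
    · exact fun x hx => (hBd x (lt_of_lt_of_le ha0 hx.1)).continuousAt.continuousWithinAt
    · exact fun x hx => (hBd x (lt_of_lt_of_le ha0 hx.1)).hasDerivWithinAt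
    · -- bound : f x = B x → f' x < B' x
      intro x hx hfx
      have hx0 : 0 < x := lt_of_lt_of_le ha0 hx.1
      have hxe : 0 < x ^ e := Real.rpow_pos_of_pos hx0 _
      have hxe1 : 0 < x ^ (e - 1) := Real.rpow_pos_of_pos hx0 _
      have h1 : f' x ≤ -lam₃ * (B x) ^ (r / 2) + lam₄ := by
        rw [← hfx]; exact hode x hx0
      have hu0 : (0:ℝ) ≤ A * x ^ e := by positivity
      have hr2' : (0:ℝ) ≤ r / 2 := by linarith
      have hBx : B x = A * x ^ e + K := rfl
      have hge1 : (A * x ^ e) ^ (r / 2) ≤ (B x) ^ (r / 2) :=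
        Real.rpow_le_rpow hu0 (by rw [hBx]; linarith) hr2'
      have hge2 : K ^ (r / 2) ≤ (B x) ^ (r / 2) :=
        Real.rpow_le_rpow hK0.le (by rw [hBx]; nlinarith) hr2'
      have hsum : ((A * x ^ e) ^ (r / 2) + K ^ (r / 2)) / 2 ≤ (B x) ^ (r / 2) := by
        linarith
      have hux : (A * x ^ e) ^ (r / 2) = A ^ (r / 2) * x ^ (e - 1) := by
        rw [Real.mul_rpow hA0.le hxe.le, ← Real.rpow_mul hx0.le, hexp]
      have hApow : A ^ (r / 2 - 1) * A = A ^ (r / 2) := by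
        rw [Real.rpow_sub hA0, Real.rpow_one]; field_simp
      have hA2 : A * α * x ^ (e - 1) < lam₃ / 2 * (A ^ (r / 2) * x ^ (e - 1)) := by
        calc A * α * x ^ (e - 1) = α * (A * x ^ (e - 1)) := by ring
          _ < lam₃ / 2 * A ^ (r / 2 - 1) * (A * x ^ (e - 1)) :=
              mul_lt_mul_of_pos_right hAr (mul_pos hA0 hxe1)
          _ = lam₃ / 2 * (A ^ (r / 2 - 1) * A * x ^ (e - 1)) := by ring
          _ = lam₃ / 2 * (A ^ (r / 2) * x ^ (e - 1)) := by rw [hApow]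
      have hB'x : B' x = -(A * α * x ^ (e - 1)) := by
        show A * (e * x ^ (e - 1)) = _
        rw [hαe]; ring
      calc f' x ≤ -lam₃ * (B x) ^ (r / 2) + lam₄ := h1
        _ ≤ -lam₃ * (((A * x ^ e) ^ (r / 2) + K ^ (r / 2)) / 2) + lam₄ := by nlinarith [hsum]
        _ = -(lam₃ / 2) * (A ^ (r / 2) * x ^ (e - 1)) + (lam₄ - lam₃ / 2 * K ^ (r / 2)) := by
          rw [hux]; ring
        _ < -(lam₃ / 2) * (A ^ (r / 2) * x ^ (e - 1)) := by linarith
        _ < B' x := by rw [hB'x]; linarith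
  -- conclude
  have hte : 0 ≤ t ^ e := (Real.rpow_pos_of_pos ht _).le
  calc f t ≤ B t := key
    _ = A * t ^ e + K := rfl
    _ ≤ (A + K) * (1 + t ^ e) := by nlinarith [hK0.le, hA0.le]
end
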